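/- arXiv:0704.3603 — 4 statements merged into one kernel-verified Lean document; each statement's English description precedes it below -/
import Mathlib

section
/- Let T be a finite rooted tree in which every simple path starting at the root has total degree sum at most m (i.e., summing the degrees d_v over vertices v on the path gives at most m). If T is spherically symmetric with root degree d_0 and every vertex at distance i from the root having degree d_i, then the number of vertices at distance a from the root equals d_0 * ∏_{i=1}^{a-1} (d_i - 1), and this is at most ((m - a + 1)/a)^a. -/
/-!
In a tree, every vertex at depth `k ≥ 1` has exactly one neighbour at depth `k - 1`, its parent,
and all its other neighbours at depth `k + 1`. Hence the sphere of radius `k + 1` is the disjoint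
union of the children of the sphere of radius `k`, and spherical symmetry turns its size into the
product `d₀ (d₁ - 1) ⋯ (d_{a-1} - 1)`. A geodesic from the root to depth `a` has degree sum
`d₀ + ⋯ + d_a ≤ m`, so the `a` factors of the product sum to at most `m - a + 1` (every `dᵢ` on
it is positive), and AM-GM bounds the product by `((m - a + 1) / a) ^ a`.
-/

open Finset SimpleGraph

namespace SimpleGraph

variable {V : Type} {G : SimpleGraph V}

theorem Walk.sum_map_support_eq_sum_range {M : Type*} [AddCommMonoid M] {u v : V}
    (p : G.Walk u v) (f : V → M) :
    (p.support.map f).sum = ∑ i ∈ range (p.length + 1), f (p.getVert i) := by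
  induction p with
  | nil => simp
  | cons h p ih =>
    rw [Walk.support_cons, List.map_cons, List.sum_cons, ih, Walk.length_cons,
      sum_range_succ' _ (p.length + 1)]
    simp [add_comm]

theorem Walk.dist_getVert_of_length_eq_dist {u v : V} {p : G.Walk u v}
    (hp : p.length = G.dist u v) {i : ℕ} (hi : i ≤ p.length) : G.dist u (p.getVert i) = i := by
  have := length_eq_dist_of_subwalk hp (p.isSubwalk_take i)
  rwa [Walk.take_length, min_eq_left hi, eq_comm] at this

theorem exists_adj_dist_add_one_eq {r u : V} (hu : G.dist r u ≠ 0) :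
    ∃ v, G.Adj v u ∧ G.dist r v + 1 = G.dist r u := by
  obtain ⟨p, -, hp⟩ := (Reachable.of_dist_ne_zero hu).exists_path_of_dist
  have hlen : 0 < p.length := by omega
  refine ⟨p.penultimate, p.adj_penultimate (Walk.not_nil_iff_lt_length.mpr hlen), ?_⟩
  rw [Walk.dist_getVert_of_length_eq_dist hp (Nat.sub_le _ _), ← hp]
  omega

theorem IsAcyclic.eq_of_adj_of_dist_add_one_eq (hG : G.IsAcyclic) {r u v w : V}
    (hv : G.Adj v u) (hw : G.Adj w u)
    (hdv : G.dist r v + 1 = G.dist r u) (hdw : G.dist r w + 1 = G.dist r u) : v = w := by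
  have hru : G.Reachable r u := Reachable.of_dist_ne_zero (by omega)
  obtain ⟨p, -, hp⟩ := (hru.trans hv.symm.reachable).exists_path_of_dist
  obtain ⟨q, -, hq⟩ := (hru.trans hw.symm.reachable).exists_path_of_dist
  have hpu : (p.concat hv).IsPath := Walk.isPath_of_length_eq_dist _ (by simp [hp, hdv])
  have hqu : (q.concat hw).IsPath := Walk.isPath_of_length_eq_dist _ (by simp [hq, hdw])
  have := congrArg Subtype.val ((hG.subsingleton_path r u).elim ⟨_, hpu⟩ ⟨_, hqu⟩)
  exact (Walk.concat_inj this).1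

theorem exists_dist_eq_of_le {r u : V} (hru : G.Reachable r u) {i : ℕ} (hi : i ≤ G.dist r u) :
    ∃ v, G.dist r v = i := by
  obtain ⟨p, -, hp⟩ := hru.exists_path_of_dist
  exact ⟨p.getVert i, Walk.dist_getVert_of_length_eq_dist hp (hp ▸ hi)⟩

theorem Walk.sum_map_degree_support_of_length_eq_dist [G.LocallyFinite] {r u : V}
    {d : ℕ → ℕ} (hsym : ∀ v, G.degree v = d (G.dist r v)) {p : G.Walk r u}
    (hp : p.length = G.dist r u) :
    (p.support.map fun v => G.degree v).sum = ∑ i ∈ range (p.length + 1), d i := by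
  rw [p.sum_map_support_eq_sum_range]
  refine sum_congr rfl fun i hi => ?_
  rw [hsym, p.dist_getVert_of_length_eq_dist hp (Nat.lt_succ_iff.mp (mem_range.mp hi))]

variable [Fintype V] [DecidableRel G.Adj]

variable (G) in
noncomputable def level (r : V) (k : ℕ) : Finset V := {u | G.dist r u = k}

variable (G) in
noncomputable def childFinset (r u : V) : Finset V :=
  {v ∈ G.neighborFinset u | G.dist r v = G.dist r u + 1}

theorem childFinset_self (r : V) : G.childFinset r r = G.neighborFinset r := by
  refine filter_true_of_mem fun v hv => ?_
  rw [dist_self, zero_add, dist_eq_one_iff_adj, ← mem_neighborFinset]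
  exact hv

theorem IsTree.card_childFinset (hG : G.IsTree) {r u : V} (hu : G.dist r u ≠ 0) :
    #(G.childFinset r u) = G.degree u - 1 := by
  obtain ⟨p, hpu, hpd⟩ := exists_adj_dist_add_one_eq hu
  have hparent : {v ∈ G.neighborFinset u | ¬ G.dist r v = G.dist r u + 1} = {p} := by
    ext v
    simp only [mem_filter, mem_neighborFinset, mem_singleton]
    constructor
    · rintro ⟨hv, hvd⟩
      have : G.dist r v + 1 = G.dist r u := by
        have := hG.dist_eq_dist_add_one_of_adj r hv
        omega
      exact hG.isAcyclic.eq_of_adj_of_dist_add_one_eq hv.symm hpu this hpd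
    · rintro rfl
      exact ⟨hpu.symm, by omega⟩
  have := card_filter_add_card_filter_not (s := G.neighborFinset u)
    (fun v => G.dist r v = G.dist r u + 1)
  rw [hparent, card_singleton, card_neighborFinset_eq_degree] at this
  rw [childFinset]
  omega

theorem level_succ_eq_biUnion [DecidableEq V] (r : V) (k : ℕ) :
    G.level r (k + 1) = (G.level r k).biUnion (G.childFinset r) := by
  ext w
  simp only [level, childFinset, mem_biUnion, mem_filter, mem_univ, true_and, mem_neighborFinset]
  constructor
  · intro hw
    obtain ⟨v, hv, hvd⟩ := exists_adj_dist_add_one_eq (G := G) (r := r) (u := w) (by omega)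
    exact ⟨v, by omega, hv, by omega⟩
  · rintro ⟨v, rfl, -, hw⟩
    exact hw

theorem IsAcyclic.pairwiseDisjoint_childFinset (hG : G.IsAcyclic) (r : V) (k : ℕ) :
    (G.level r k : Set V).PairwiseDisjoint (G.childFinset r) := by
  intro u hu v hv huv
  simp only [coe_filter, level, mem_univ, true_and, Set.mem_ofPred_eq] at hu hv
  refine Finset.disjoint_left.mpr fun w hwu hwv => huv ?_
  simp only [childFinset, mem_filter, mem_neighborFinset] at hwu hwv
  exact hG.eq_of_adj_of_dist_add_one_eq (r := r) hwu.1 hwv.1 (by omega) (by omega)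

-- The number of children of a vertex at depth `i`: every vertex but the root has a parent.
def childCount (d : ℕ → ℕ) : ℕ → ℕ
  | 0 => d 0
  | i + 1 => d (i + 1) - 1

theorem prod_range_succ_childCount (d : ℕ → ℕ) (n : ℕ) :
    ∏ i ∈ range (n + 1), childCount d i = d 0 * ∏ i ∈ Icc 1 n, (d i - 1) := by
  rw [prod_range_succ', mul_comm, ← Ico_add_one_right_eq_Icc, prod_Ico_eq_prod_range,
    Nat.add_sub_cancel]
  simp only [add_comm 1]
  rfl

theorem sum_range_succ_childCount_add (d : ℕ → ℕ) (n : ℕ) (hd : ∀ i ∈ Icc 1 n, 0 < d i) :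
    ∑ i ∈ range (n + 1), childCount d i + n = ∑ i ∈ range (n + 1), d i := by
  induction n with
  | zero => rfl
  | succ n ih =>
    have := hd (n + 1) (by simp)
    rw [sum_range_succ, sum_range_succ _ (n + 1),
      ← ih fun i hi => hd i (Icc_subset_Icc_right n.le_succ hi), childCount]
    omega

theorem IsTree.card_level_succ (hG : G.IsTree) {r : V} {d : ℕ → ℕ}
    (hsym : ∀ u, G.degree u = d (G.dist r u)) (k : ℕ) :
    #(G.level r (k + 1)) = #(G.level r k) * childCount d k := by
  classical
  rw [level_succ_eq_biUnion, card_biUnion (hG.isAcyclic.pairwiseDisjoint_childFinset r k),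
    sum_const_nat fun u hu => ?_]
  simp only [level, mem_filter, mem_univ, true_and] at hu
  cases k with
  | zero =>
    rw [hG.connected.dist_eq_zero_iff] at hu
    rw [← hu, childFinset_self, card_neighborFinset_eq_degree, hsym, dist_self, childCount]
  | succ k => rw [hG.card_childFinset (by omega), hsym, hu, childCount]

theorem IsTree.card_level (hG : G.IsTree) {r : V} {d : ℕ → ℕ}
    (hsym : ∀ u, G.degree u = d (G.dist r u)) (k : ℕ) :
    #(G.level r k) = ∏ i ∈ range k, childCount d i := by
  induction k with
  | zero =>
    rw [prod_range_zero, card_eq_one]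
    exact ⟨r, by ext u; simp [level, hG.connected.dist_eq_zero_iff, eq_comm]⟩
  | succ k ih => rw [hG.card_level_succ hsym, ih, prod_range_succ]

end SimpleGraph

theorem Real.prod_le_sum_div_card_pow {ι : Type*} (s : Finset ι) (z : ι → ℝ)
    (hz : ∀ i ∈ s, 0 ≤ z i) : ∏ i ∈ s, z i ≤ ((∑ i ∈ s, z i) / #s) ^ #s := by
  rcases s.eq_empty_or_nonempty with rfl | hs
  · simp
  have hn : (#s : ℝ) ≠ 0 := by exact_mod_cast hs.card_pos.ne'
  calc ∏ i ∈ s, z i = (∏ i ∈ s, z i ^ (#s : ℝ)⁻¹) ^ #s := by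
        rw [← prod_pow]
        exact prod_congr rfl fun i hi => (Real.rpow_inv_natCast_pow (hz i hi) hs.card_pos.ne').symm
    _ ≤ (∑ i ∈ s, (#s : ℝ)⁻¹ * z i) ^ #s := by
        gcongr
        · exact prod_nonneg fun i hi => Real.rpow_nonneg (hz i hi) _
        · exact Real.geom_mean_le_arith_mean_weighted s _ z (fun _ _ => by positivity)
            (by simp [hn]) hz
    _ = ((∑ i ∈ s, z i) / #s) ^ #s := by rw [← mul_sum, inv_mul_eq_div]

theorem stmt0_general {V : Type} [Fintype V]
    (G : SimpleGraph V) [DecidableRel G.Adj] (hT : G.IsTree)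
    (r : V) (a m : ℕ) (ha : 0 < a)
    (hheight : ∃ u, G.dist r u = a)
    (hpath : ∀ (u : V) (p : G.Walk r u), p.IsPath →
      (p.support.map (fun x => G.degree x)).sum ≤ m)
    (d : ℕ → ℕ) (hsym : ∀ u : V, G.degree u = d (G.dist r u)) :
    (Finset.univ.filter (fun u : V => G.dist r u = a)).card
      = d 0 * ∏ i ∈ Finset.Icc 1 (a - 1), (d i - 1) ∧
    ((Finset.univ.filter (fun u : V => G.dist r u = a)).card : ℝ)
      ≤ (((m : ℝ) - a + 1) / a) ^ a := by
  obtain ⟨u, hu⟩ := hheight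
  obtain ⟨n, rfl⟩ := Nat.exists_eq_add_one_of_ne_zero ha.ne'
  have hcard : #(G.level r (n + 1)) = ∏ i ∈ range (n + 1), childCount d i :=
    hT.card_level hsym (n + 1)
  have hd_pos : ∀ i ∈ Icc 1 n, 0 < d i := by
    intro i hi
    have : Nontrivial V := ⟨r, u, fun h => by simp [h] at hu⟩
    obtain ⟨v, rfl⟩ := exists_dist_eq_of_le (hT.connected r u) (i := i) (by simp at hi; omega)
    exact hsym v ▸ hT.connected.preconnected.degree_pos_of_nontrivial v
  have hdeg_sum : ∑ i ∈ range (n + 1), childCount d i + n ≤ m := by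
    obtain ⟨p, hp, hlen⟩ := hT.connected.exists_path_of_dist r u
    have := hpath u p hp
    rw [p.sum_map_degree_support_of_length_eq_dist hsym hlen, hlen, hu, sum_range_succ,
      ← sum_range_succ_childCount_add d n hd_pos] at this
    omega
  refine ⟨hcard.trans (by simpa using prod_range_succ_childCount d n), ?_⟩
  calc (#(G.level r (n + 1)) : ℝ) = ∏ i ∈ range (n + 1), (childCount d i : ℝ) := by
        exact_mod_cast hcard
    _ ≤ ((∑ i ∈ range (n + 1), (childCount d i : ℝ)) / (n + 1 : ℕ)) ^ (n + 1) := by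
        simpa using Real.prod_le_sum_div_card_pow (range (n + 1)) _ fun _ _ => by positivity
    _ ≤ ((m - (n + 1 : ℕ) + 1) / (n + 1 : ℕ)) ^ (n + 1) := by
        gcongr
        have : (∑ i ∈ range (n + 1), (childCount d i : ℝ)) + n ≤ m := by exact_mod_cast hdeg_sum
        push_cast
        linarith

/-- In a finite rooted tree where every simple path from the root has
vertex-degree sum at most `m`, if the tree is spherically symmetric with degree `d i`
at distance `i` from the root, then the sphere at distance `a` has exactly
`d 0 * ∏_{i=1}^{a-1} (d i - 1)` vertices, and this is at most `((m - a + 1)/a)^a`. -/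
theorem stmt0 {V : Type} [Fintype V] [DecidableEq V]
    (G : SimpleGraph V) [DecidableRel G.Adj] (hT : G.IsTree)
    (r : V) (a m : ℕ) (ha : 0 < a)
    (hheight : ∃ u, G.dist r u = a)
    (hpath : ∀ (u : V) (p : G.Walk r u), p.IsPath →
      (p.support.map (fun x => G.degree x)).sum ≤ m)
    (d : ℕ → ℕ) (hsym : ∀ u : V, G.degree u = d (G.dist r u)) :
    (Finset.univ.filter (fun u : V => G.dist r u = a)).card
      = d 0 * ∏ i ∈ Finset.Icc 1 (a - 1), (d i - 1) ∧
    ((Finset.univ.filter (fun u : V => G.dist r u = a)).card : ℝ)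
      ≤ (((m : ℝ) - a + 1) / a) ^ a :=
  stmt0_general G hT r a m ha hheight hpath d hsym
end

section
/- Let (Z_r) be a Galton–Watson branching process with offspring distribution Poisson(d), d > 1, started from Z_0 = 1. Then for every t > 0, sup over r of E[exp(t Z_r d^{-r})] is finite. -/
/-!
Write `ψ s = d (eˢ - 1)` for the cumulant generating function of Poisson(d). Conditioning on
`Z r`, which is independent of the offspring counts of generation `r`, gives
`E[x ^ Z (r+1)] = E[(E[x ^ N]) ^ Z r]`, hence `E[exp (s Z r)] = exp (ψ^[r] s)`, and it remains to
bound `ψ^[r] (t / d^r)` uniformly in `r`.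
Since `ψ s ≤ d s eˢ`, the iterates `sⱼ` of `ψ` from `u = t / d^r` satisfy
`sⱼ ≤ dʲ u exp (s₀ + ⋯ + sⱼ₋₁)`; when `e t ≤ d - 1`, a strong induction shows `sⱼ ≤ e u dʲ` for
`j ≤ r`, the geometric sum of these bounds staying below `1`. Larger `t` reduce to smaller ones
through `ψ^[r+1] (t d / d^(r+1)) = ψ (ψ^[r] (t / d^r))` and the monotonicity of `ψ`.
-/

open MeasureTheory ProbabilityTheory Finset

open scoped ENNReal

noncomputable def poissonCgf (d s : ℝ) : ℝ := d * (Real.exp s - 1)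

section NatValued

variable {Ω : Type*} {mΩ : MeasurableSpace Ω} {μ : Measure Ω}

lemma lintegral_comp_eq_tsum {K : Ω → ℕ} (hK : Measurable K) (g : ℕ → ℝ≥0∞) :
    ∫⁻ ω, g (K ω) ∂μ = ∑' k, g k * μ (K ⁻¹' {k}) := by
  rw [← lintegral_map measurable_from_top hK, lintegral_countable']
  simp_rw [Measure.map_apply hK (measurableSet_singleton _)]

lemma lintegral_exp_pow_of_poisson {X : Ω → ℕ} (hX : Measurable X) {d : ℝ} (hd : 0 ≤ d)
    (hdist : ∀ k, μ {ω | X ω = k} = ENNReal.ofReal (Real.exp (-d) * d ^ k / (Nat.factorial k)))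
    (s : ℝ) :
    ∫⁻ ω, ENNReal.ofReal (Real.exp s) ^ X ω ∂μ = ENNReal.ofReal (Real.exp (poissonCgf d s)) := by
  have hterm (k : ℕ) : ENNReal.ofReal (Real.exp s) ^ k * μ (X ⁻¹' {k})
      = ENNReal.ofReal (Real.exp (-d) * ((d * Real.exp s) ^ k / k.factorial)) := by
    rw [show μ (X ⁻¹' {k}) = _ from hdist k, ← ENNReal.ofReal_pow (Real.exp_nonneg s),
      ← ENNReal.ofReal_mul (by positivity)]
    ring_nf
  have hsum : HasSum (fun k : ℕ => Real.exp (-d) * ((d * Real.exp s) ^ k / k.factorial))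
      (Real.exp (poissonCgf d s)) := by
    have h := (NormedSpace.expSeries_div_hasSum_exp (d * Real.exp s)).mul_left (Real.exp (-d))
    rwa [← Real.exp_eq_exp_ℝ, ← Real.exp_add, neg_add_eq_sub, ← mul_sub_one] at h
  simp_rw [lintegral_comp_eq_tsum hX, hterm]
  rw [← ENNReal.ofReal_tsum_of_nonneg (fun k => by positivity) hsum.summable, hsum.tsum_eq]

lemma integral_exp_mul_eq_toReal_lintegral {X : Ω → ℕ} (hX : Measurable X) (s : ℝ) :
    ∫ ω, Real.exp (s * X ω) ∂μ = (∫⁻ ω, ENNReal.ofReal (Real.exp s) ^ X ω ∂μ).toReal := by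
  rw [integral_eq_lintegral_of_nonneg_ae (.of_forall fun _ => Real.exp_nonneg _)
    (by fun_prop)]
  simp_rw [← ENNReal.ofReal_pow (Real.exp_nonneg s), ← Real.exp_nat_mul, mul_comm s]

end NatValued

section Analysis

variable {d : ℝ}

lemma poissonCgf_nonneg (hd : 0 ≤ d) {s : ℝ} (hs : 0 ≤ s) : 0 ≤ poissonCgf d s :=
  mul_nonneg hd (sub_nonneg.2 (Real.one_le_exp hs))

lemma poissonCgf_monotone (hd : 0 ≤ d) : Monotone (poissonCgf d) := fun _ _ hab =>
  mul_le_mul_of_nonneg_left (sub_le_sub_right (Real.exp_le_exp.2 hab) 1) hd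

lemma poissonCgf_le_mul_exp (hd : 0 ≤ d) (s : ℝ) : poissonCgf d s ≤ d * s * Real.exp s := by
  have h : (1 - s) * Real.exp s ≤ 1 := by
    have := mul_le_mul_of_nonneg_right (by linarith [Real.add_one_le_exp (-s)] :
      1 - s ≤ Real.exp (-s)) (Real.exp_pos s).le
    rwa [← Real.exp_add, neg_add_cancel, Real.exp_zero] at this
  unfold poissonCgf
  nlinarith

lemma iterate_poissonCgf_nonneg (hd : 0 ≤ d) {u : ℝ} (hu : 0 ≤ u) (j : ℕ) :
    0 ≤ (poissonCgf d)^[j] u := by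
  induction j with
  | zero => exact hu
  | succ j ih => rw [Function.iterate_succ_apply']; exact poissonCgf_nonneg hd ih

lemma iterate_poissonCgf_le_exp_sum (hd : 0 ≤ d) {u : ℝ} (hu : 0 ≤ u) (j : ℕ) :
    (poissonCgf d)^[j] u ≤ d ^ j * u * Real.exp (∑ i ∈ range j, (poissonCgf d)^[i] u) := by
  induction j with
  | zero => simp
  | succ j ih =>
    set s := (poissonCgf d)^[j] u
    have hs : 0 ≤ s := iterate_poissonCgf_nonneg hd hu j
    rw [Function.iterate_succ_apply', sum_range_succ, Real.exp_add]
    calc poissonCgf d s ≤ d * s * Real.exp s := poissonCgf_le_mul_exp hd s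
      _ ≤ d * (d ^ j * u * Real.exp (∑ i ∈ range j, (poissonCgf d)^[i] u)) * Real.exp s := by
          gcongr
      _ = _ := by ring

lemma iterate_poissonCgf_le_of_small (hd : 1 < d) {u : ℝ} (hu : 0 ≤ u) {r : ℕ}
    (hsmall : Real.exp 1 * u * d ^ r ≤ d - 1) :
    ∀ j ≤ r, (poissonCgf d)^[j] u ≤ Real.exp 1 * u * d ^ j := by
  intro j
  induction j using Nat.strong_induction_on with
  | _ j ih =>
    intro hj
    have hsum : ∑ i ∈ range j, (poissonCgf d)^[i] u ≤ 1 := calc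
      ∑ i ∈ range j, (poissonCgf d)^[i] u ≤ ∑ i ∈ range j, Real.exp 1 * u * d ^ i :=
        sum_le_sum fun i hi => ih i (mem_range.1 hi) (by have := mem_range.1 hi; omega)
      _ = Real.exp 1 * u * (d ^ j - 1) / (d - 1) := by
        rw [← mul_sum, geom_sum_eq hd.ne', mul_div_assoc]
      _ ≤ Real.exp 1 * u * d ^ r / (d - 1) := by
        gcongr
        linarith [pow_le_pow_right₀ hd.le hj]
      _ ≤ 1 := by rw [div_le_one (by linarith)]; exact hsmall
    calc (poissonCgf d)^[j] u
        ≤ d ^ j * u * Real.exp (∑ i ∈ range j, (poissonCgf d)^[i] u) :=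
          iterate_poissonCgf_le_exp_sum (by linarith) hu j
      _ ≤ d ^ j * u * Real.exp 1 := by gcongr
      _ = Real.exp 1 * u * d ^ j := by ring

lemma exists_iterate_poissonCgf_le_of_small (hd : 1 < d) {t : ℝ} (ht : 0 ≤ t)
    (hsmall : Real.exp 1 * t ≤ d - 1) :
    ∃ B, ∀ r : ℕ, (poissonCgf d)^[r] (t / d ^ r) ≤ B := by
  refine ⟨Real.exp 1 * t, fun r => ?_⟩
  have hdr : d ^ r ≠ 0 := pow_ne_zero r (by linarith)
  have hu : Real.exp 1 * (t / d ^ r) * d ^ r = Real.exp 1 * t := by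
    rw [mul_assoc, div_mul_cancel₀ t hdr]
  have key := iterate_poissonCgf_le_of_small hd (div_nonneg ht (by positivity))
    (hu.trans_le hsmall) r le_rfl
  rwa [hu] at key

lemma exists_iterate_poissonCgf_le_mul (hd : 1 < d) {t B : ℝ}
    (hB : ∀ r : ℕ, (poissonCgf d)^[r] (t / d ^ r) ≤ B) :
    ∃ B', ∀ r : ℕ, (poissonCgf d)^[r] (t * d / d ^ r) ≤ B' := by
  refine ⟨max (t * d) (poissonCgf d B), fun r => ?_⟩
  cases r with
  | zero => simp
  | succ r =>
    rw [pow_succ, mul_div_mul_right t _ (by linarith), Function.iterate_succ_apply']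
    exact le_max_of_le_right (poissonCgf_monotone (by linarith) (hB r))

lemma exists_iterate_poissonCgf_le (hd : 1 < d) {t : ℝ} (ht : 0 ≤ t) :
    ∃ B, ∀ r : ℕ, (poissonCgf d)^[r] (t / d ^ r) ≤ B := by
  obtain ⟨n, hn⟩ := pow_unbounded_of_one_lt (Real.exp 1 * t / (d - 1)) hd
  induction n generalizing t with
  | zero =>
    refine exists_iterate_poissonCgf_le_of_small hd ht ?_
    rw [pow_zero, div_lt_one (by linarith)] at hn
    exact hn.le
  | succ n ih =>
    have hd0 : 0 < d := by linarith
    rw [pow_succ, ← div_lt_iff₀ hd0] at hn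
    obtain ⟨B, hB⟩ := ih (t := t / d) (by positivity) (by convert hn using 1; ring)
    simpa only [div_mul_cancel₀ t hd0.ne'] using exists_iterate_poissonCgf_le_mul hd hB

end Analysis

section SigmaGen

variable {Ω ι β : Type*} {mΩ : MeasurableSpace Ω} [mβ : MeasurableSpace β] {μ : Measure Ω}
  {X : ι → Ω → β} {S T : Set ι}

abbrev sigmaGen (X : ι → Ω → β) (S : Set ι) : MeasurableSpace Ω := ⨆ i ∈ S, mβ.comap (X i)

lemma sigmaGen_le (hX : ∀ i, Measurable (X i)) (S : Set ι) : sigmaGen X S ≤ mΩ :=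
  iSup₂_le fun i _ => (hX i).comap_le

lemma sigmaGen_mono (hST : S ⊆ T) : sigmaGen X S ≤ sigmaGen X T := biSup_mono hST

lemma measurable_sigmaGen {i : ι} (hi : i ∈ S) : Measurable[sigmaGen X S] (X i) :=
  measurable_iff_comap_le.2 (le_iSup₂_of_le i hi le_rfl)

lemma ProbabilityTheory.iIndepFun.indep_sigmaGen (h : iIndepFun X μ) (hX : ∀ i, Measurable (X i))
    (hST : Disjoint S T) : Indep (sigmaGen X S) (sigmaGen X T) μ :=
  indep_iSup_of_disjoint (fun i => (hX i).comap_le) h.iIndep hST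

end SigmaGen

section RandomSum

variable {Ω : Type*}

lemma lintegral_pow_sum_range_of_iIndepFun {mΩ : MeasurableSpace Ω} {μ : Measure Ω}
    {X : ℕ → Ω → ℕ} (hX : ∀ i, Measurable (X i)) (hXindep : iIndepFun X μ) {x c : ℝ≥0∞}
    (hc : ∀ i, ∫⁻ ω, x ^ X i ω ∂μ = c) (k : ℕ) :
    ∫⁻ ω, x ^ ∑ i ∈ range k, X i ω ∂μ = c ^ k := by
  simp_rw [← prod_pow_eq_pow_sum]
  rw [lintegral_prod_eq_prod_lintegral_of_indepFun _ (fun i ω => x ^ X i ω)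
    (hXindep.comp (fun _ n => x ^ n) fun _ => measurable_from_top)
    fun i => measurable_from_top.comp (hX i)]
  simp [hc]

theorem lintegral_pow_sum_range_of_indep {m₁ m₂ mΩ : MeasurableSpace Ω} {μ : Measure Ω}
    {K : Ω → ℕ} {X : ℕ → Ω → ℕ} (hm₁ : m₁ ≤ mΩ) (hm₂ : m₂ ≤ mΩ) (hindep : Indep m₁ m₂ μ)
    (hK : Measurable[m₁] K) (hX : ∀ i, Measurable[m₂] (X i)) (hXindep : iIndepFun X μ)
    {x c : ℝ≥0∞} (hc : ∀ i, ∫⁻ ω, x ^ X i ω ∂μ = c) :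
    ∫⁻ ω, x ^ ∑ i ∈ range (K ω), X i ω ∂μ = ∫⁻ ω, c ^ K ω ∂μ := by
  have hK' : Measurable K := hK.mono hm₁ le_rfl
  have hslice_meas (k : ℕ) : Measurable[m₁] ((K ⁻¹' {k}).indicator (1 : Ω → ℝ≥0∞)) :=
    Measurable.indicator (@measurable_const _ _ _ m₁ _) (hK (measurableSet_singleton k))
  have hpow_meas (k : ℕ) : Measurable[m₂] fun ω => x ^ ∑ i ∈ range k, X i ω :=
    measurable_from_top.comp (Finset.measurable_sum _ fun i _ => hX i)
  have hsplit (ω : Ω) : x ^ ∑ i ∈ range (K ω), X i ω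
      = ∑' k, (K ⁻¹' {k}).indicator 1 ω * x ^ ∑ i ∈ range k, X i ω := by
    rw [tsum_eq_single (K ω) fun k hk => by simp [Ne.symm hk]]
    simp
  calc ∫⁻ ω, x ^ ∑ i ∈ range (K ω), X i ω ∂μ
      = ∑' k, ∫⁻ ω, (K ⁻¹' {k}).indicator 1 ω * x ^ ∑ i ∈ range k, X i ω ∂μ := by
        simp_rw [hsplit]
        exact lintegral_tsum fun k =>
          (((hslice_meas k).mono hm₁ le_rfl).mul ((hpow_meas k).mono hm₂ le_rfl)).aemeasurable
    _ = ∑' k, c ^ k * μ (K ⁻¹' {k}) := by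
        congr 1 with k
        rw [lintegral_mul_eq_lintegral_mul_lintegral_of_independent_measurableSpace hm₁ hm₂
          hindep (hslice_meas k) (hpow_meas k), lintegral_indicator_one
          (hK' (measurableSet_singleton k)), lintegral_pow_sum_range_of_iIndepFun
          (fun i => (hX i).mono hm₂ le_rfl) hXindep hc, mul_comm]
    _ = ∫⁻ ω, c ^ K ω ∂μ := (lintegral_comp_eq_tsum hK' _).symm

end RandomSum

section GaltonWatson

variable {Ω : Type*} {mΩ : MeasurableSpace Ω} {μ : Measure Ω}
  {N : ℕ → ℕ → Ω → ℕ} {Z : ℕ → Ω → ℕ}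

lemma measurable_galtonWatson_past (hZ0 : ∀ ω, Z 0 ω = 1)
    (hZrec : ∀ r ω, Z (r + 1) ω = ∑ i ∈ range (Z r ω), N r i ω) (r : ℕ) :
    Measurable[sigmaGen (Function.uncurry N) {p | p.1 < r}] (Z r) := by
  induction r with
  | zero => simpa only [funext hZ0] using measurable_const
  | succ r ih =>
    let _ : MeasurableSpace Ω := sigmaGen (Function.uncurry N) {p | p.1 < r + 1}
    have hZr : Measurable (Z r) :=
      ih.mono (sigmaGen_mono fun _ hp => Nat.lt_succ_of_lt hp) le_rfl
    have hrow : Measurable fun q : Ω × ℕ => ∑ i ∈ range q.2, N r i q.1 :=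
      measurable_from_prod_countable_left fun k =>
        Finset.measurable_sum (range k) fun i _ =>
          measurable_sigmaGen (X := Function.uncurry N) (i := (r, i)) (Nat.lt_succ_self r)
    rw [show Z (r + 1) = _ from funext (hZrec r)]
    exact hrow.comp (measurable_id.prodMk hZr)

lemma measurable_galtonWatson (hmeas : ∀ r i, Measurable (N r i)) (hZ0 : ∀ ω, Z 0 ω = 1)
    (hZrec : ∀ r ω, Z (r + 1) ω = ∑ i ∈ range (Z r ω), N r i ω) (r : ℕ) : Measurable (Z r) :=
  (measurable_galtonWatson_past hZ0 hZrec r).mono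
    (sigmaGen_le (X := Function.uncurry N) (fun p => hmeas p.1 p.2) _) le_rfl

lemma lintegral_pow_galtonWatson_succ (hmeas : ∀ r i, Measurable (N r i))
    (hindep : iIndepFun (Function.uncurry N) μ) (hZ0 : ∀ ω, Z 0 ω = 1)
    (hZrec : ∀ r ω, Z (r + 1) ω = ∑ i ∈ range (Z r ω), N r i ω)
    {x c : ℝ≥0∞} (hc : ∀ r i, ∫⁻ ω, x ^ N r i ω ∂μ = c) (r : ℕ) :
    ∫⁻ ω, x ^ Z (r + 1) ω ∂μ = ∫⁻ ω, c ^ Z r ω ∂μ := by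
  have hmeas' (p : ℕ × ℕ) : Measurable (Function.uncurry N p) := hmeas p.1 p.2
  have hdisj : Disjoint {p : ℕ × ℕ | p.1 < r} {p | p.1 = r} :=
    Set.disjoint_left.2 fun _ hlt heq => hlt.ne heq
  have hrow (i : ℕ) : Measurable[sigmaGen (Function.uncurry N) {p | p.1 = r}] (N r i) :=
    measurable_sigmaGen (X := Function.uncurry N) (i := (r, i)) rfl
  simp_rw [hZrec r]
  exact lintegral_pow_sum_range_of_indep (sigmaGen_le hmeas' _) (sigmaGen_le hmeas' _)
    (hindep.indep_sigmaGen hmeas' hdisj) (measurable_galtonWatson_past hZ0 hZrec r) hrow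
    (hindep.precomp (g := fun i => (r, i)) fun _ _ h => (Prod.mk.inj h).2) (hc r)

lemma lintegral_exp_pow_galtonWatson [IsProbabilityMeasure μ] {d : ℝ} (hd : 0 ≤ d)
    (hmeas : ∀ r i, Measurable (N r i))
    (hdist : ∀ r i k, μ {ω | N r i ω = k}
      = ENNReal.ofReal (Real.exp (-d) * d ^ k / (Nat.factorial k)))
    (hindep : iIndepFun (Function.uncurry N) μ) (hZ0 : ∀ ω, Z 0 ω = 1)
    (hZrec : ∀ r ω, Z (r + 1) ω = ∑ i ∈ range (Z r ω), N r i ω) (r : ℕ) (s : ℝ) :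
    ∫⁻ ω, ENNReal.ofReal (Real.exp s) ^ Z r ω ∂μ
      = ENNReal.ofReal (Real.exp ((poissonCgf d)^[r] s)) := by
  induction r generalizing s with
  | zero => simp [hZ0]
  | succ r ih =>
    rw [lintegral_pow_galtonWatson_succ hmeas hindep hZ0 hZrec
      (fun r i => lintegral_exp_pow_of_poisson (hmeas r i) hd (hdist r i) s) r,
      ih, Function.iterate_succ_apply]

end GaltonWatson

/-- For a Galton–Watson branching process `Z` with Poisson(d) offspring
distribution (`d > 1`), built from an iid array `N` of Poisson(d) variables via
`Z_0 = 1`, `Z_{r+1} = ∑_{i < Z_r} N_{r,i}`, the exponential moments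
`E[exp(t Z_r d^{-r})]` are bounded uniformly in `r`, for every `t > 0`. -/
theorem stmt3 {Ω : Type} [MeasurableSpace Ω] (μ : Measure Ω) [IsProbabilityMeasure μ]
    (d : ℝ) (hd : 1 < d)
    (N : ℕ → ℕ → Ω → ℕ)
    (hmeas : ∀ r i, Measurable (N r i))
    (hdist : ∀ r i k, μ {ω | N r i ω = k}
      = ENNReal.ofReal (Real.exp (-d) * d ^ k / (Nat.factorial k)))
    (hindep : iIndepFun
      (fun p : ℕ × ℕ => N p.1 p.2) μ)
    (Z : ℕ → Ω → ℕ)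
    (hZ0 : ∀ ω, Z 0 ω = 1)
    (hZrec : ∀ r ω, Z (r + 1) ω = ∑ i ∈ Finset.range (Z r ω), N r i ω) :
    ∀ t : ℝ, 0 < t → ∃ C : ℝ, ∀ r : ℕ,
      ∫ ω, Real.exp (t * (Z r ω : ℝ) * d ^ (-(r : ℤ))) ∂μ ≤ C := by
  intro t ht
  obtain ⟨B, hB⟩ := exists_iterate_poissonCgf_le hd ht.le
  refine ⟨Real.exp B, fun r => ?_⟩
  simp_rw [zpow_neg, zpow_natCast, ← div_eq_mul_inv, mul_div_right_comm t]
  rw [integral_exp_mul_eq_toReal_lintegral (measurable_galtonWatson hmeas hZ0 hZrec r),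
    lintegral_exp_pow_galtonWatson (by linarith) hmeas hdist hindep hZ0 hZrec,
    ENNReal.toReal_ofReal (Real.exp_nonneg _)]
  exact Real.exp_le_exp.2 (hB r)
end

section
/- Let T be a Galton–Watson tree with offspring distribution N satisfying E[exp(tN)] < ∞ for all t, and let M(r) denote the maximum, over all simple paths from the root in the first r levels of T, of the sum of vertex degrees along the path. Then for every t there is a constant c(t) with exp(c(t)) ≥ E[(1 + K exp(tK))] (K the root degree) such that E[exp(t M(r))] ≤ exp(c(t) r) for all r. -/
/-!
Cutting a path at the root, `exp (t M_{r+1}(u)) ≤ 1 + ∑_{i < N_u} exp (t N_u) exp (t M_r(u i))`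
(the `1` covers a leaf). The height-`r` quantity `M_r(u i)` is a function of the offspring
numbers in the subtree of `u i` only, hence independent of `N_u`; taking expectations gives
`E exp (t M_{r+1}) ≤ 1 + E[K exp (t K)] · (E[1 + K exp (t K)])^r ≤ (E[1 + K exp (t K)])^(r+1)`,
so `c = log E[1 + K exp (t K)]` works.
-/

open MeasureTheory ProbabilityTheory
open scoped ENNReal

theorem Measurable.apply_of_countable {Ω ι β : Type*} {m : MeasurableSpace Ω}
    [MeasurableSpace ι] [Countable ι] [MeasurableSingletonClass ι] [MeasurableSpace β]
    {g : Ω → ι} (hg : Measurable g) {h : ι → Ω → β} (hh : ∀ i, Measurable (h i)) :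
    Measurable fun ω => h (g ω) ω :=
  (measurable_from_prod_countable_left (f := fun p : Ω × ι => h p.2 p.1) hh).comp
    (measurable_id.prodMk hg)

theorem Finset.measurable_sup {ι δ α : Type*} {m : MeasurableSpace δ} [MeasurableSpace α]
    [SemilatticeSup α] [OrderBot α] [MeasurableSup₂ α] (s : Finset ι) {f : ι → δ → α}
    (hf : ∀ i ∈ s, Measurable (f i)) : Measurable fun x => s.sup fun i => f i x := by
  simp only [← Finset.sup_apply]
  exact Finset.sup_induction measurable_const (fun _ h₁ _ h₂ => h₁.sup h₂) hf

theorem identDistrib_of_measure_singleton_eq {Ω Ω' α : Type*} [MeasurableSpace Ω]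
    [MeasurableSpace Ω'] [MeasurableSpace α] [Countable α] [MeasurableSingletonClass α]
    {μ : Measure Ω} {ν : Measure Ω'} {X : Ω → α} {Y : Ω' → α} (hX : Measurable X)
    (hY : Measurable Y) (h : ∀ a, μ (X ⁻¹' {a}) = ν (Y ⁻¹' {a})) : IdentDistrib X Y μ ν where
  aemeasurable_fst := hX.aemeasurable
  aemeasurable_snd := hY.aemeasurable
  map_eq := Measure.ext_of_singleton fun a => by
    rw [Measure.map_apply hX (.singleton a), Measure.map_apply hY (.singleton a), h]

theorem tsum_indicator_lt_eq (f : ℕ → ℝ≥0∞) (k : ℕ) :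
    ∑' i, {n | i < n}.indicator f k = k * f k := by
  rw [tsum_eq_sum (s := Finset.range k) fun i hi => by simp_all]
  rw [Finset.sum_congr rfl fun i hi =>
    Set.indicator_of_mem (s := {n | i < n}) (Finset.mem_range.mp hi) f]
  simp

theorem integrable_mul_exp_of_integrable_exp {Ω : Type*} [MeasurableSpace Ω] {μ : Measure Ω}
    {X : Ω → ℝ} (hX : Measurable X) (hX₀ : ∀ ω, 0 ≤ X ω) {t : ℝ}
    (h : Integrable (fun ω => Real.exp ((t + 1) * X ω)) μ) :
    Integrable (fun ω => X ω * Real.exp (t * X ω)) μ := by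
  refine h.mono (by fun_prop) (.of_forall fun ω => ?_)
  have hx := hX₀ ω
  rw [Real.norm_of_nonneg (by positivity), Real.norm_of_nonneg (by positivity)]
  calc X ω * Real.exp (t * X ω) ≤ Real.exp (X ω) * Real.exp (t * X ω) := by
        gcongr
        linarith [Real.add_one_le_exp (X ω)]
    _ = Real.exp ((t + 1) * X ω) := by rw [← Real.exp_add]; ring_nf

-- Valued in `ℝ≥0∞`, so that moments are `lintegral`s: Tonelli and the product formula for
-- independent factors then hold without integrability side conditions.
noncomputable def expNat (t : ℝ) (n : ℕ) : ℝ≥0∞ := ENNReal.ofReal (Real.exp (t * n))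

theorem expNat_add (t : ℝ) (a b : ℕ) : expNat t (a + b) = expNat t a * expNat t b := by
  rw [expNat, expNat, expNat, ← ENNReal.ofReal_mul (Real.exp_pos _).le, ← Real.exp_add]
  push_cast
  ring_nf

theorem ofReal_integral_one_add_mul_exp {Ω : Type*} [MeasurableSpace Ω] {μ : Measure Ω}
    [IsProbabilityMeasure μ] {K : Ω → ℕ} (hK : Measurable K) {t : ℝ}
    (h : Integrable (fun ω => Real.exp ((t + 1) * K ω)) μ) :
    ENNReal.ofReal (∫ ω, (1 + (K ω : ℝ) * Real.exp (t * K ω)) ∂μ)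
      = 1 + ∫⁻ ω, K ω * expNat t (K ω) ∂μ := by
  have hint : Integrable (fun ω => 1 + (K ω : ℝ) * Real.exp (t * K ω)) μ :=
    (integrable_const 1).add
      (integrable_mul_exp_of_integrable_exp (by fun_prop) (fun ω => Nat.cast_nonneg _) h)
  have hpt : ∀ ω, ENNReal.ofReal (1 + (K ω : ℝ) * Real.exp (t * K ω))
      = 1 + K ω * expNat t (K ω) := fun ω => by
    rw [ENNReal.ofReal_add zero_le_one (by positivity), ENNReal.ofReal_one,
      ENNReal.ofReal_mul (Nat.cast_nonneg _), ENNReal.ofReal_natCast, expNat]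
  rw [ofReal_integral_eq_lintegral_ofReal hint (.of_forall fun ω => by dsimp; positivity),
    lintegral_congr hpt, lintegral_add_left measurable_const, lintegral_one, measure_univ]

/-- The constraint `i < k` sits in an indicator, so that the sum has a fixed index set and
commutes with `∫⁻` even when `k` is random. -/
theorem expNat_add_sup_le (t : ℝ) (k : ℕ) (m : ℕ → ℕ) :
    expNat t (k + (Finset.range k).sup m)
      ≤ 1 + ∑' i, {n | i < n}.indicator (expNat t) k * expNat t (m i) := by
  rcases Nat.eq_zero_or_pos k with rfl | hk
  · simp [expNat]
  obtain ⟨j, hj, hsup⟩ := Finset.exists_mem_eq_sup _ ⟨0, Finset.mem_range.mpr hk⟩ m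
  calc expNat t (k + (Finset.range k).sup m)
      = {n | j < n}.indicator (expNat t) k * expNat t (m j) := by
        rw [hsup, expNat_add, Set.indicator_of_mem (s := {n | j < n}) (Finset.mem_range.mp hj)]
    _ ≤ ∑' i, {n | i < n}.indicator (expNat t) k * expNat t (m i) := ENNReal.le_tsum j
    _ ≤ _ := le_add_self

namespace GaltonWatson

variable {Ω : Type*} {N : List ℕ → Ω → ℕ} {M : ℕ → List ℕ → Ω → ℕ}

abbrev descendantSigma (N : List ℕ → Ω → ℕ) (u : List ℕ) : MeasurableSpace Ω :=
  ⨆ (w) (_ : u <+: w), MeasurableSpace.comap (N w) inferInstance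

theorem descendantSigma_le [mΩ : MeasurableSpace Ω] (hmeas : ∀ u, Measurable (N u))
    (u : List ℕ) : descendantSigma N u ≤ mΩ :=
  iSup₂_le fun w _ => (hmeas w).comap_le

theorem measurable_descendantSigma_self (u : List ℕ) : Measurable[descendantSigma N u] (N u) :=
  Measurable.of_comap_le <|
    le_iSup₂ (f := fun w (_ : u <+: w) => MeasurableSpace.comap (N w) inferInstance) u
      (List.prefix_refl u)

theorem descendantSigma_append_le (u v : List ℕ) :
    descendantSigma N (u ++ v) ≤ descendantSigma N u :=
  biSup_mono fun _ hw => (List.prefix_append u v).trans hw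

theorem measurable_descendantSigma_of_recursion (hM0 : ∀ u ω, M 0 u ω = 0)
    (hMrec : ∀ r u ω, M (r + 1) u ω
      = N u ω + (Finset.range (N u ω)).sup (fun i => M r (u ++ [i]) ω))
    (r : ℕ) (u : List ℕ) : Measurable[descendantSigma N u] (M r u) := by
  induction r generalizing u with
  | zero => simp only [funext (hM0 u), measurable_const]
  | succ r ih =>
    rw [funext (hMrec r u)]
    refine (measurable_descendantSigma_self u).apply_of_countable
      (h := fun k ω => k + (Finset.range k).sup fun i => M r (u ++ [i]) ω) fun k => ?_
    refine measurable_const.add (Finset.measurable_sup _ fun i _ => ?_)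
    exact (ih (u ++ [i])).mono (descendantSigma_append_le u [i]) le_rfl

theorem indepFun_of_measurable_descendantSigma [MeasurableSpace Ω] {μ : Measure Ω} {β : Type*}
    [MeasurableSpace β] (hmeas : ∀ u, Measurable (N u)) (hindep : iIndepFun N μ)
    {u : List ℕ} {i : ℕ} {X : Ω → β} (hX : Measurable[descendantSigma N (u ++ [i])] X) : IndepFun (N u) X μ := by
  have hdisj : Disjoint {u} {w | u ++ [i] <+: w} := by
    refine Set.disjoint_singleton_left.mpr fun h => ?_
    simpa using h.length_le
  have h := indep_iSup_of_disjoint (fun w => (hmeas w).comap_le) hindep.iIndep hdisj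
  rw [iSup_singleton] at h
  rw [IndepFun_iff_Indep]
  exact indep_of_indep_of_le_right h hX.comap_le

theorem lintegral_expNat_succ_le [MeasurableSpace Ω] {μ : Measure Ω} [IsProbabilityMeasure μ]
    (hmeas : ∀ u, Measurable (N u)) (hident : ∀ u, IdentDistrib (N u) (N []) μ μ)
    (hindep : iIndepFun N μ)
    (hMrec : ∀ r u ω, M (r + 1) u ω
      = N u ω + (Finset.range (N u ω)).sup (fun i => M r (u ++ [i]) ω))
    (t : ℝ) {r : ℕ} (hM : ∀ u, Measurable[descendantSigma N u] (M r u)) (u : List ℕ)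
    {C : ℝ≥0∞} (hC : ∀ i, ∫⁻ ω, expNat t (M r (u ++ [i]) ω) ∂μ ≤ C) :
    ∫⁻ ω, expNat t (M (r + 1) u ω) ∂μ
      ≤ 1 + (∫⁻ ω, N [] ω * expNat t (N [] ω) ∂μ) * C := by
  set φ : ℕ → ℕ → ℝ≥0∞ := fun i => {n | i < n}.indicator (expNat t)
  have hφ : ∀ i, Measurable fun ω => φ i (N u ω) := fun i =>
    (Measurable.of_discrete (f := φ i)).comp (hmeas u)
  have hMr : ∀ i, Measurable fun ω => expNat t (M r (u ++ [i]) ω) := fun i =>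
    (Measurable.of_discrete (f := expNat t)).comp
      ((hM _).mono (descendantSigma_le hmeas _) le_rfl)
  calc ∫⁻ ω, expNat t (M (r + 1) u ω) ∂μ
      ≤ ∫⁻ ω, 1 + ∑' i, φ i (N u ω) * expNat t (M r (u ++ [i]) ω) ∂μ :=
        lintegral_mono fun ω => (hMrec r u ω).symm ▸ expNat_add_sup_le t _ _
    _ = 1 + ∑' i, ∫⁻ ω, φ i (N u ω) * expNat t (M r (u ++ [i]) ω) ∂μ := by
        rw [lintegral_add_left measurable_const, lintegral_one, measure_univ,
          lintegral_tsum (f := fun i ω => φ i (N u ω) * expNat t (M r (u ++ [i]) ω))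
            fun i => ((hφ i).mul (hMr i)).aemeasurable]
    _ = 1 + ∑' i, (∫⁻ ω, φ i (N u ω) ∂μ) * ∫⁻ ω, expNat t (M r (u ++ [i]) ω) ∂μ := by
        congr 1
        refine tsum_congr fun i => lintegral_mul_eq_lintegral_mul_lintegral_of_indepFun''
          (hφ i).aemeasurable (hMr i).aemeasurable ?_
        exact (indepFun_of_measurable_descendantSigma hmeas hindep (hM _)).comp
          (Measurable.of_discrete (f := φ i)) (Measurable.of_discrete (f := expNat t))
    _ ≤ 1 + ∑' i, (∫⁻ ω, φ i (N u ω) ∂μ) * C := by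
        gcongr with i
        exact hC i
    _ = 1 + (∫⁻ ω, N u ω * expNat t (N u ω) ∂μ) * C := by
        rw [ENNReal.tsum_mul_right, ← lintegral_tsum fun i => (hφ i).aemeasurable]
        simp only [φ, tsum_indicator_lt_eq]
    _ = 1 + (∫⁻ ω, N [] ω * expNat t (N [] ω) ∂μ) * C := by
        congr 2
        exact ((hident u).comp (Measurable.of_discrete
          (f := fun k : ℕ => (k : ℝ≥0∞) * expNat t k))).lintegral_eq

theorem lintegral_expNat_le_pow [MeasurableSpace Ω] {μ : Measure Ω} [IsProbabilityMeasure μ]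
    (hmeas : ∀ u, Measurable (N u)) (hident : ∀ u, IdentDistrib (N u) (N []) μ μ)
    (hindep : iIndepFun N μ) (hM0 : ∀ u ω, M 0 u ω = 0)
    (hMrec : ∀ r u ω, M (r + 1) u ω
      = N u ω + (Finset.range (N u ω)).sup (fun i => M r (u ++ [i]) ω))
    (t : ℝ) (r : ℕ) (u : List ℕ) :
    ∫⁻ ω, expNat t (M r u ω) ∂μ ≤ (1 + ∫⁻ ω, N [] ω * expNat t (N [] ω) ∂μ) ^ r := by
  induction r generalizing u with
  | zero => simp [hM0, expNat]
  | succ r ih =>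
    set B := ∫⁻ ω, N [] ω * expNat t (N [] ω) ∂μ
    calc ∫⁻ ω, expNat t (M (r + 1) u ω) ∂μ
        ≤ 1 + B * (1 + B) ^ r := lintegral_expNat_succ_le hmeas hident hindep hMrec t
          (measurable_descendantSigma_of_recursion hM0 hMrec r) u fun i => ih (u ++ [i])
      _ ≤ (1 + B) ^ r + B * (1 + B) ^ r := by
        gcongr
        exact one_le_pow_of_one_le' le_self_add r
      _ = (1 + B) ^ (r + 1) := by ring

end GaltonWatson

/-- For a Galton–Watson tree built from an iid array `N` of offspring
variables (indexed by Ulam–Harris labels `List ℕ`) with all exponential moments finite,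
let `M r` be the maximal path degree sum over the first `r` levels, satisfying the
recursion `M (r+1) at u = N u + max_{i < N u} M r at (u ++ [i])`, `M 0 = 0`. Then for
every `t` there is `c` with `exp c ≥ E[1 + K exp(t K)]` (`K` the root degree) such that
`E[exp(t M(r))] ≤ exp(c r)` for all `r`. -/
theorem stmt4 {Ω : Type} [MeasurableSpace Ω] (μ : Measure Ω) [IsProbabilityMeasure μ]
    (N : List ℕ → Ω → ℕ)
    (hmeas : ∀ u, Measurable (N u))
    (hident : ∀ u k, μ {ω | N u ω = k} = μ {ω | N [] ω = k})
    (hindep : iIndepFun N μ)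
    (hexp : ∀ t : ℝ, Integrable (fun ω => Real.exp (t * (N [] ω : ℝ))) μ)
    (M : ℕ → List ℕ → Ω → ℕ)
    (hM0 : ∀ u ω, M 0 u ω = 0)
    (hMrec : ∀ r u ω, M (r + 1) u ω
      = N u ω + (Finset.range (N u ω)).sup (fun i => M r (u ++ [i]) ω)) :
    ∀ t : ℝ, ∃ c : ℝ,
      (∫ ω, (1 + (N ([] : List ℕ) ω : ℝ) * Real.exp (t * (N ([] : List ℕ) ω : ℝ))) ∂μ) ≤ Real.exp c ∧
      ∀ r : ℕ, ∫ ω, Real.exp (t * (M r ([] : List ℕ) ω : ℝ)) ∂μ ≤ Real.exp (c * r) := by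
  intro t
  have hident' : ∀ u, IdentDistrib (N u) (N []) μ μ := fun u =>
    identDistrib_of_measure_singleton_eq (hmeas u) (hmeas []) (hident u)
  have hI := ofReal_integral_one_add_mul_exp (μ := μ) (hmeas []) (hexp (t + 1))
  set I := ∫ ω, (1 + (N [] ω : ℝ) * Real.exp (t * N [] ω)) ∂μ
  have hI_pos : 0 < I := one_pos.trans_le (ENNReal.one_le_ofReal.mp (hI ▸ le_self_add))
  refine ⟨Real.log I, (Real.exp_log hI_pos).ge, fun r => ?_⟩
  have hMr : Measurable (M r []) :=
    (GaltonWatson.measurable_descendantSigma_of_recursion hM0 hMrec r []).mono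
      (GaltonWatson.descendantSigma_le hmeas []) le_rfl
  rw [integral_eq_lintegral_of_nonneg_ae (.of_forall fun ω => (Real.exp_pos _).le) (by fun_prop)]
  refine ENNReal.toReal_le_of_le_ofReal (Real.exp_pos _).le ?_
  calc ∫⁻ ω, ENNReal.ofReal (Real.exp (t * M r [] ω)) ∂μ
      ≤ ENNReal.ofReal I ^ r :=
        hI ▸ GaltonWatson.lintegral_expNat_le_pow hmeas hident' hindep hM0 hMrec t r []
    _ = ENNReal.ofReal (Real.exp (Real.log I * r)) := by
      rw [← ENNReal.ofReal_pow hI_pos.le, mul_comm, Real.exp_nat_mul, Real.exp_log hI_pos]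
end

section
/- Let G be a graph such that for every vertex v, the number of vertices within distance a of v in the self-avoiding-walk tree T_SAW(v) is at most b. Then for every positive integer j and every vertex v, the number of vertices within distance j·a of v in T_SAW(v) is at most b^j. -/
/-- The number of vertices of the self-avoiding-walk tree `T_SAW(v)` within distance `r`
of its root, i.e. the number of walks from `v` of length at most `r` that do not repeat
a vertex except possibly at the terminal vertex. -/
noncomputable def sawCount {V : Type} (G : SimpleGraph V) (v : V) (r : ℕ) : ℕ :=
  Nat.card {p : Σ u : V, G.Walk v u // p.2.length ≤ r ∧ p.2.support.dropLast.Nodup}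

/-!
Cutting a self-avoiding walk of length at most `L + a` after `L` steps leaves a self-avoiding
walk of length at most `L` followed by one of length at most `a` from its endpoint, and the
walk is determined by the two pieces; so the counts are submultiplicative, and induction on `j`
gives `b ^ j`. Since `Nat.card` of an infinite set is `0`, the hypothesis says nothing about a
vertex with infinitely many self-avoiding walks of length at most `a`. This is harmless: there
are infinitely many self-avoiding walks of length at most `r` from `v` exactly when some vertex
of infinite degree is reachable from `v` in fewer than `r` steps, so such a vertex at the end of
the first piece makes the count for `L + a` infinite as well, hence `0`.
-/

open Finset

namespace SimpleGraph

variable {V : Type} {G : SimpleGraph V}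

def sawSet (G : SimpleGraph V) (v : V) (r : ℕ) : Set (Σ u : V, G.Walk v u) :=
  {p | p.2.length ≤ r ∧ p.2.support.dropLast.Nodup}

theorem sawCount_eq_ncard (v : V) (r : ℕ) : sawCount G v r = (G.sawSet v r).ncard :=
  Nat.card_coe_set_eq _

namespace Walk

variable {u v w : V}

theorem dropLast_support_append (p : G.Walk u v) (q : G.Walk v w) :
    (p.append q).support.dropLast = p.support.dropLast ++ q.support.dropLast := by
  rw [support_append_eq_support_dropLast_append, List.dropLast_append_of_ne_nil q.support_ne_nil]

theorem nodup_dropLast_support_take {p : G.Walk u v} (h : p.support.dropLast.Nodup) (n : ℕ) :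
    (p.take n).support.dropLast.Nodup := by
  rw [← p.append_take_drop_eq n, dropLast_support_append] at h
  exact (List.nodup_append.mp h).1

theorem nodup_dropLast_support_drop {p : G.Walk u v} (h : p.support.dropLast.Nodup) (n : ℕ) :
    (p.drop n).support.dropLast.Nodup := by
  rw [← p.append_take_drop_eq n, dropLast_support_append] at h
  exact (List.nodup_append.mp h).2.1

end Walk

open Walk

theorem finite_setOf_walk_length_le {v : V} {r : ℕ}
    (h : ∀ y (p : G.Walk v y), p.length < r → (G.neighborSet y).Finite) :
    {p : Σ u, G.Walk v u | p.2.length ≤ r}.Finite := by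
  induction r generalizing v with
  | zero =>
    refine (Set.finite_singleton ⟨v, nil⟩).subset ?_
    rintro ⟨u, p⟩ hp
    cases p with
    | nil => rfl
    | cons => simp at hp
  | succ r ih =>
    have : Finite (G.neighborSet v) := (h v nil r.succ_pos).to_subtype
    have hcons : ∀ y : G.neighborSet v, {p : Σ u, G.Walk y.1 u | p.2.length ≤ r}.Finite :=
      fun y => ih fun z p hp => h z (cons ((G.mem_neighborSet v y).1 y.2) p)
        (by rw [length_cons]; omega)
    refine ((Set.finite_iUnion fun y => (hcons y).image
      fun q => (⟨q.1, cons ((G.mem_neighborSet v y).1 y.2) q.2⟩ : Σ u, G.Walk v u)).insert ⟨v, nil⟩).subset ?_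
    rintro ⟨u, p⟩ hp
    cases p with
    | nil => exact Set.mem_insert _ _
    | cons hadj q =>
      refine Set.mem_insert_of_mem _ (Set.mem_iUnion.mpr ⟨⟨_, hadj⟩, ⟨_, q⟩, ?_, rfl⟩)
      simpa using hp

theorem sawSet_infinite_of_neighborSet_infinite {v y : V} {r : ℕ}
    (hy : (G.neighborSet y).Infinite) (p : G.Walk v y) (hp : p.length < r) :
    (G.sawSet v r).Infinite := by
  classical
  have : Infinite (G.neighborSet y) := hy.to_subtype
  refine (Set.infinite_range_of_injective (f := fun z : G.neighborSet y =>
    (⟨z, p.bypass.concat ((G.mem_neighborSet y z).1 z.2)⟩ : Σ u, G.Walk v u)) fun z z' hz => Subtype.ext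
      (congrArg Sigma.fst hz)).mono ?_
  rintro _ ⟨z, rfl⟩
  refine ⟨?_, ?_⟩
  · have := p.length_bypass_le_length
    simp only [length_concat]
    omega
  · rw [support_concat, List.dropLast_concat]
    exact p.bypass_isPath.support_nodup

theorem sawSet_infinite_iff {v : V} {r : ℕ} :
    (G.sawSet v r).Infinite ↔
      ∃ y, (G.neighborSet y).Infinite ∧ ∃ p : G.Walk v y, p.length < r := by
  refine ⟨fun hinf => ?_, fun ⟨y, hy, p, hp⟩ => sawSet_infinite_of_neighborSet_infinite hy p hp⟩
  by_contra! hfin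
  have hwalks := finite_setOf_walk_length_le fun y p hp =>
    Set.not_infinite.mp fun hy => (hfin y hy p).not_gt hp
  exact hinf (hwalks.subset fun p hp => hp.1)

theorem sawSet_add_infinite_of_walk {v x : V} {L a : ℕ} (hx : (G.sawSet x a).Infinite)
    (p : G.Walk v x) (hp : p.length ≤ L) : (G.sawSet v (L + a)).Infinite := by
  obtain ⟨y, hy, q, hq⟩ := sawSet_infinite_iff.mp hx
  exact sawSet_infinite_iff.mpr ⟨y, hy, p.append q, by rw [length_append]; omega⟩

theorem sawSet_mono {v : V} {r s : ℕ} (h : r ≤ s) : G.sawSet v r ⊆ G.sawSet v s :=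
  fun _ hp => ⟨hp.1.trans h, hp.2⟩

theorem take_mem_sawSet {v : V} {L a : ℕ} {p : Σ u, G.Walk v u} (hp : p ∈ G.sawSet v (L + a)) :
    (⟨p.2.getVert L, p.2.take L⟩ : Σ u, G.Walk v u) ∈ G.sawSet v L :=
  ⟨by simp, nodup_dropLast_support_take hp.2 L⟩

theorem mem_image_append_sawSet {v : V} {L a : ℕ} {p : Σ u, G.Walk v u}
    (hp : p ∈ G.sawSet v (L + a)) :
    p ∈ (fun s => (⟨s.1, (p.2.take L).append s.2⟩ : Σ u, G.Walk v u)) ''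
      G.sawSet (p.2.getVert L) a := by
  refine ⟨⟨p.1, p.2.drop L⟩, ⟨?_, nodup_dropLast_support_drop hp.2 L⟩, ?_⟩
  · have := hp.1
    simp only [drop_length]
    omega
  · simp only [append_take_drop_eq]

theorem ncard_sawSet_add_le {a b : ℕ} (h : ∀ x, (G.sawSet x a).ncard ≤ b) (v : V) (L : ℕ) :
    (G.sawSet v (L + a)).ncard ≤ b * (G.sawSet v L).ncard := by
  classical
  by_cases hinf : (G.sawSet v (L + a)).Infinite
  · simp [hinf.ncard]
  have hfin := Set.not_infinite.mp hinf
  obtain ⟨S, hS⟩ := hfin.exists_finset_coe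
  let head : (Σ u, G.Walk v u) → Σ u, G.Walk v u := fun p => ⟨p.2.getVert L, p.2.take L⟩
  have hfiber : ∀ t ∈ S.image head, #{p ∈ S | head p = t} ≤ b := by
    intro t ht
    let extend : (Σ u, G.Walk t.1 u) → Σ u, G.Walk v u := fun s => ⟨s.1, t.2.append s.2⟩
    have htail : (G.sawSet t.1 a).Finite := by
      obtain ⟨p, -, rfl⟩ := Finset.mem_image.mp ht
      exact Set.not_infinite.mp fun hx =>
        hinf (sawSet_add_infinite_of_walk hx (p.2.take L) (by simp))
    have hsub : (↑{p ∈ S | head p = t} : Set (Σ u, G.Walk v u)) ⊆ extend '' G.sawSet t.1 a := by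
      intro p hp
      obtain ⟨hpS, rfl⟩ : p ∈ S ∧ head p = t := by simpa using hp
      exact mem_image_append_sawSet (hS ▸ hpS)
    calc #{p ∈ S | head p = t}
        ≤ (extend '' G.sawSet t.1 a).ncard := by
          rw [← Set.ncard_coe_finset]
          exact Set.ncard_le_ncard hsub (htail.image _)
      _ ≤ (G.sawSet t.1 a).ncard := Set.ncard_image_le htail
      _ ≤ b := h t.1
  have himage : (↑(S.image head) : Set (Σ u, G.Walk v u)) ⊆ G.sawSet v L := by
    rw [Finset.coe_image, hS]
    exact Set.image_subset_iff.mpr fun p hp => take_mem_sawSet hp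
  calc (G.sawSet v (L + a)).ncard = #S := by rw [← hS, Set.ncard_coe_finset]
    _ ≤ b * #(S.image head) := Finset.card_le_mul_card_image S b hfiber
    _ ≤ b * (G.sawSet v L).ncard := by
      rw [← Set.ncard_coe_finset]
      exact Nat.mul_le_mul_left b
        (Set.ncard_le_ncard himage (hfin.subset (sawSet_mono (Nat.le_add_right L a))))

end SimpleGraph

open SimpleGraph in
/-- If for every vertex `v` the self-avoiding-walk tree `T_SAW(v)` has at
most `b` vertices within distance `a` of the root, then for every positive integer `j`
it has at most `b^j` vertices within distance `j·a` of the root. -/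
theorem stmt6 {V : Type} (G : SimpleGraph V) (a b : ℕ)
    (h : ∀ v : V, sawCount G v a ≤ b) :
    ∀ (j : ℕ), 0 < j → ∀ v : V, sawCount G v (j * a) ≤ b ^ j := by
  intro j hj
  induction j, hj using Nat.le_induction with
  | base => simpa using h
  | succ j _ ih =>
    intro v
    simp only [sawCount_eq_ncard] at h ih ⊢
    calc (G.sawSet v ((j + 1) * a)).ncard = (G.sawSet v (j * a + a)).ncard := by
          rw [Nat.succ_mul]
      _ ≤ b * (G.sawSet v (j * a)).ncard := ncard_sawSet_add_le h v _
      _ ≤ b * b ^ j := Nat.mul_le_mul_left b (ih v)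
      _ = b ^ (j + 1) := (pow_succ' b j).symm
end
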